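/- The probability measure σ_γ with Σ-transform Σ_{σ_γ}(z) = exp(−γz) has mean 1, pseudo-variance function 𝕍_{σ_γ}(m) = γm²/ln(m) − m², and variance function V_{σ_γ}(m) = γ m(m−1)/ln(m) + m(1−m) on its domain of means contained in (0,1). -/

import Mathlib

open MeasureTheory Set Filter Topology ENNReal

noncomputable section

/-- Cauchy-Stieltjes moment-type transform `M_ν(θ) = ∫ 1/(1-θx) dν(x)`. -/
def Mcs (ν : Measure ℝ) (θ : ℝ) : ℝ := ∫ x, 1 / (1 - θ * x) ∂ν

/-- The mean map `k_ν(θ) = (M_ν(θ) - 1)/(θ M_ν(θ))`. -/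
def kcs (ν : Measure ℝ) (θ : ℝ) : ℝ := (Mcs ν θ - 1) / (θ * Mcs ν θ)

/-- The Cauchy transform `G_ν(z) = ∫ 1/(z-x) dν(x)`. -/
def Gcs (ν : Measure ℝ) (z : ℝ) : ℝ := ∫ x, 1 / (z - x) ∂ν

/-- `Ψ_ν(z) = ∫ zx/(1-zx) dν(x)`. -/
def PsiT (ν : Measure ℝ) (z : ℝ) : ℝ := ∫ x, z * x / (1 - z * x) ∂ν

/-- Topological support of a measure on ℝ. -/
def msupp (ν : Measure ℝ) : Set ℝ := {x | ∀ U ∈ 𝓝 x, ν U ≠ 0}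

/-- The natural parameter domain `(θ₋, θ₊) \ {0}`: nonzero `θ` with `θ x < 1` on the support. -/
def ΘDom (ν : Measure ℝ) : Set ℝ := {θ | θ ≠ 0 ∧ ∀ x ∈ msupp ν, θ * x < 1}

/-- Right-sided parameter domain `(0, θ₊)`. -/
def ΘPlus (ν : Measure ℝ) : Set ℝ := {θ | 0 < θ ∧ ∀ x ∈ msupp ν, θ * x < 1}

/-- `ψ_ν`, the inverse of the mean map `k_ν` on the parameter domain. -/
def ψcs (ν : Measure ℝ) : ℝ → ℝ := Function.invFunOn (kcs ν) (ΘDom ν)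

/-- `ψ_ν` for the right-sided family. -/
def ψplus (ν : Measure ℝ) : ℝ → ℝ := Function.invFunOn (kcs ν) (ΘPlus ν)

/-- `ψ_ν` for the left-sided family (measures on `[0,∞)`, parameter `θ < 0`). -/
def ψminus (ν : Measure ℝ) : ℝ → ℝ := Function.invFunOn (kcs ν) (Iio 0)

/-- The pseudo-variance function `𝕍_ν(m) = m (1/ψ_ν(m) - m)`. -/
def pseudoVar (ν : Measure ℝ) (m : ℝ) : ℝ := m * (1 / ψcs ν m - m)

def pseudoVarMinus (ν : Measure ℝ) (m : ℝ) : ℝ := m * (1 / ψminus ν m - m)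

/-- The tilted measure `P_{θ,ν}(dx) = ν(dx)/(M_ν(θ)(1-θx))`. -/
def tilt (ν : Measure ℝ) (θ : ℝ) : Measure ℝ :=
  ν.withDensity (fun x => ENNReal.ofReal (1 / (Mcs ν θ * (1 - θ * x))))

/-- `Q_{m,ν}`, the element of the CSK family with mean `m`. -/
def Qcsk (ν : Measure ℝ) (m : ℝ) : Measure ℝ := tilt ν (ψcs ν m)

def QcskMinus (ν : Measure ℝ) (m : ℝ) : Measure ℝ := tilt ν (ψminus ν m)

/-- The variance function `V_ν(m) = ∫ (x-m)² dQ_{m,ν}(x)`. -/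
def varFun (ν : Measure ℝ) (m : ℝ) : ℝ := ∫ x, (x - m) ^ 2 ∂(Qcsk ν m)

def varFunMinus (ν : Measure ℝ) (m : ℝ) : ℝ := ∫ x, (x - m) ^ 2 ∂(QcskMinus ν m)

/-- Domain of means (two-sided). -/
def meanDom (ν : Measure ℝ) : Set ℝ := kcs ν '' ΘDom ν

/-- Right-sided domain of means `(m₀(ν), m₊(ν))`. -/
def meanDomPlus (ν : Measure ℝ) : Set ℝ := kcs ν '' ΘPlus ν

/-- Left-sided domain of means `(m₋(ν), m₀(ν))`. -/
def meanDomMinus (ν : Measure ℝ) : Set ℝ := kcs ν '' Iio 0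

/-- `χ_ν`, the inverse of `Ψ_ν` on negative reals. -/
def χT (ν : Measure ℝ) : ℝ → ℝ := Function.invFunOn (PsiT ν) (Iio 0)

/-- The S-transform `S_ν(z) = χ_ν(z)(1+z)/z`. -/
def Stransf (ν : Measure ℝ) (z : ℝ) : ℝ := χT ν z * (1 + z) / z

/-- `m₋(ν) = -1/G_ν(0)` for a measure on `[0,∞)`. -/
def mMinus (ν : Measure ℝ) : ℝ := -(Gcs ν 0)⁻¹

/-- The self-energy (K-transform) `K_ν(z) = z - 1/G_ν(z)`. -/
def KT (ν : Measure ℝ) (z : ℝ) : ℝ := z - 1 / Gcs ν z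

/-- A measure is non-degenerate if it is not a Dirac mass. -/
def Nondeg (ν : Measure ℝ) : Prop := ∀ c : ℝ, ν ≠ Measure.dirac c
def pseudoVarPlus (ν : Measure ℝ) (m : ℝ) : ℝ := m * (1 / ψplus ν m - m)

def QcskPlus (ν : Measure ℝ) (m : ℝ) : Measure ℝ := tilt ν (ψplus ν m)

def varFunPlus (ν : Measure ℝ) (m : ℝ) : ℝ := ∫ x, (x - m) ^ 2 ∂(QcskPlus ν m)

/-- The mean of a measure on `[0,∞)`, as an extended nonnegative real. -/
def m0E (ν : Measure ℝ) : ℝ≥0∞ := ∫⁻ x, ENNReal.ofReal x ∂ν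

/-- The Σ-transform `Σ_ν(z) = S_ν(z/(1-z))`. -/
def SigmaT (ν : Measure ℝ) (z : ℝ) : ℝ := Stransf ν (z / (1 - z))

/-- The free Poisson (Marchenko–Pastur) law with density `(1/2π)√((4-x)/x)` on `(0,4)`. -/
def freePoisson : Measure ℝ :=
  volume.withDensity (fun x => ENNReal.ofReal
    (Set.indicator (Ioo 0 4) (fun y => (1/(2*Real.pi)) * Real.sqrt ((4 - y)/y)) x))

/-!
Fix `θ < 0` and put `M = M_σ(θ)`; on `[0, ∞)` one has `σ{0} < M < 1` and `Ψ_σ(θ) = M - 1`. As `Ψ_σ`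
is strictly increasing on `(-∞, 0)`, `χ_σ(M - 1) = θ`, so `Σ_σ((M - 1)/M) = θM/(M - 1) = 1/k_σ(θ)`
and the hypothesis becomes `k_σ(θ) = exp(γ(M - 1)/M)`. Letting `θ → 0⁻` gives `M → 1` and
`∫ x/(1 - θx) dσ = k_σ(θ) M → 1`, so the mean is `1` by monotone convergence. For `m = k_σ(θ)`,
`log m = γ(M - 1)/M < 0` and `1/θ = γm / log m`, which is the pseudo-variance `m(1/θ - m)`. A partial
fraction decomposition of `(x - m)²/(1 - θx)` gives `V(m) = (m - m₀)(1/θ - m)` in any such family.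
-/

section CauchyStieltjes

variable {σ : Measure ℝ}

lemma ae_nonneg_of_measure_Iio_eq_zero (h : σ (Iio 0) = 0) : ∀ᵐ x ∂σ, 0 ≤ x := by
  rw [ae_iff]
  simp only [not_le]
  exact h

lemma measure_Ioi_ne_zero_of_measure_Iio_eq_zero [IsProbabilityMeasure σ] (hneg : σ (Iio 0) = 0)
    (hatom : σ {0} < 1) : σ (Ioi 0) ≠ 0 := by
  intro h
  have hIic : σ (Iic 0) = 1 := by
    rwa [← prob_compl_eq_zero_iff measurableSet_Iic, compl_Iic]
  have : σ (Iic 0) ≤ σ {0} := by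
    calc σ (Iic 0) = σ (Iio 0 ∪ {0}) := by rw [Iio_union_right]
      _ ≤ σ (Iio 0) + σ {0} := measure_union_le _ _
      _ = σ {0} := by rw [hneg, zero_add]
  exact (hIic ▸ this).not_gt hatom

lemma one_le_one_sub_mul {θ x : ℝ} (hθ : θ ≤ 0) (hx : 0 ≤ x) : 1 ≤ 1 - θ * x := by
  nlinarith

lemma integral_pos_of_pos_on_Ioi (hσ : σ (Ioi 0) ≠ 0) {f : ℝ → ℝ} (hf : Integrable f σ)
    (hf0 : 0 ≤ᵐ[σ] f) (hfpos : ∀ x, 0 < x → 0 < f x) : 0 < ∫ x, f x ∂σ := by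
  rw [integral_pos_iff_support_of_nonneg_ae hf0 hf]
  exact pos_iff_ne_zero.2 fun h => hσ (measure_mono_null (fun x hx => (hfpos x hx).ne') h)

lemma ae_norm_one_div_one_sub_mul_le_one (h0 : ∀ᵐ x ∂σ, 0 ≤ x) {θ : ℝ} (hθ : θ ≤ 0) :
    ∀ᵐ x ∂σ, ‖1 / (1 - θ * x)‖ ≤ 1 := by
  filter_upwards [h0] with x hx
  have := one_le_one_sub_mul hθ hx
  rw [Real.norm_of_nonneg (by positivity)]
  exact div_le_one_of_le₀ this (by positivity)

lemma integrable_one_div_one_sub_mul [IsFiniteMeasure σ] (h0 : ∀ᵐ x ∂σ, 0 ≤ x) {θ : ℝ}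
    (hθ : θ ≤ 0) : Integrable (fun x => 1 / (1 - θ * x)) σ :=
  (integrable_const 1).mono' (by fun_prop : Measurable _).aestronglyMeasurable
    (ae_norm_one_div_one_sub_mul_le_one h0 hθ)

lemma ae_div_one_sub_mul_eq (h0 : ∀ᵐ x ∂σ, 0 ≤ x) {θ : ℝ} (hθ : θ < 0) :
    (fun x => x / (1 - θ * x)) =ᵐ[σ] fun x => (1 / (1 - θ * x) - 1) / θ := by
  filter_upwards [h0] with x hx
  have : 1 - θ * x ≠ 0 := (one_le_one_sub_mul hθ.le hx).trans_lt' one_pos |>.ne'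
  rw [eq_div_iff hθ.ne, div_sub_one this]
  ring

lemma integrable_div_one_sub_mul [IsFiniteMeasure σ] (h0 : ∀ᵐ x ∂σ, 0 ≤ x) {θ : ℝ}
    (hθ : θ < 0) : Integrable (fun x => x / (1 - θ * x)) σ :=
  (((integrable_one_div_one_sub_mul h0 hθ.le).sub (integrable_const 1)).div_const θ).congr
    (ae_div_one_sub_mul_eq h0 hθ).symm

lemma integral_div_one_sub_mul [IsProbabilityMeasure σ] (h0 : ∀ᵐ x ∂σ, 0 ≤ x) {θ : ℝ}
    (hθ : θ < 0) : ∫ x, x / (1 - θ * x) ∂σ = (Mcs σ θ - 1) / θ := by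
  rw [integral_congr_ae (ae_div_one_sub_mul_eq h0 hθ), integral_div,
    integral_sub (integrable_one_div_one_sub_mul h0 hθ.le) (integrable_const 1)]
  simp [Mcs]

lemma PsiT_eq_Mcs_sub_one [IsProbabilityMeasure σ] (h0 : ∀ᵐ x ∂σ, 0 ≤ x) {θ : ℝ}
    (hθ : θ ≤ 0) : PsiT σ θ = Mcs σ θ - 1 := by
  have h : ∀ᵐ x ∂σ, θ * x / (1 - θ * x) = 1 / (1 - θ * x) - 1 := by
    filter_upwards [h0] with x hx
    have := one_le_one_sub_mul hθ hx
    field_simp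
    ring
  rw [PsiT, integral_congr_ae h,
    integral_sub (integrable_one_div_one_sub_mul h0 hθ) (integrable_const 1)]
  simp [Mcs]

lemma Mcs_lt_one [IsProbabilityMeasure σ] (h0 : ∀ᵐ x ∂σ, 0 ≤ x) (hσ : σ (Ioi 0) ≠ 0) {θ : ℝ}
    (hθ : θ < 0) : Mcs σ θ < 1 := by
  have hint := integrable_one_div_one_sub_mul h0 hθ.le
  have hpos : 0 < ∫ x, (1 - 1 / (1 - θ * x)) ∂σ := by
    refine integral_pos_of_pos_on_Ioi hσ ((integrable_const 1).sub hint) ?_ fun x hx => ?_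
    · filter_upwards [h0] with x hx
      have := one_le_one_sub_mul hθ.le hx
      simp only [Pi.zero_apply, sub_nonneg]
      exact div_le_one_of_le₀ this (by positivity)
    · have : 1 < 1 - θ * x := by nlinarith
      rw [sub_pos, div_lt_one (by positivity)]
      exact this
  rw [integral_sub (integrable_const 1) hint] at hpos
  simpa [Mcs] using hpos

lemma measureReal_zero_lt_Mcs [IsFiniteMeasure σ] (h0 : ∀ᵐ x ∂σ, 0 ≤ x) (hσ : σ (Ioi 0) ≠ 0)
    {θ : ℝ} (hθ : θ < 0) : (σ {0}).toReal < Mcs σ θ := by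
  have hint := integrable_one_div_one_sub_mul h0 hθ.le
  have hind : Integrable (({0} : Set ℝ).indicator fun _ => (1 : ℝ)) σ :=
    (integrable_const 1).indicator (measurableSet_singleton 0)
  have hpos : 0 < ∫ x, (1 / (1 - θ * x) - ({0} : Set ℝ).indicator (fun _ => 1) x) ∂σ := by
    refine integral_pos_of_pos_on_Ioi hσ (hint.sub hind) ?_ fun x hx => ?_
    · filter_upwards [h0] with x hx
      rcases hx.eq_or_lt with rfl | hx
      · simp
      · have := one_le_one_sub_mul hθ.le hx.le
        rw [Pi.zero_apply, indicator_of_notMem (mem_singleton_iff.not.2 hx.ne'), sub_zero]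
        positivity
    · have := one_le_one_sub_mul hθ.le hx.le
      rw [indicator_of_notMem (mem_singleton_iff.not.2 hx.ne'), sub_zero]
      positivity
  rw [integral_sub hint hind, integral_indicator_const _ (measurableSet_singleton 0)] at hpos
  simpa [Mcs, measureReal_def] using hpos

lemma Mcs_pos [IsFiniteMeasure σ] (h0 : ∀ᵐ x ∂σ, 0 ≤ x) (hσ : σ (Ioi 0) ≠ 0) {θ : ℝ}
    (hθ : θ < 0) : 0 < Mcs σ θ :=
  toReal_nonneg.trans_lt (measureReal_zero_lt_Mcs h0 hσ hθ)

lemma strictMonoOn_Mcs [IsFiniteMeasure σ] (h0 : ∀ᵐ x ∂σ, 0 ≤ x) (hσ : σ (Ioi 0) ≠ 0) :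
    StrictMonoOn (Mcs σ) (Iio 0) := by
  intro a ha b hb hab
  have hia := integrable_one_div_one_sub_mul h0 (le_of_lt ha)
  have hib := integrable_one_div_one_sub_mul h0 (le_of_lt hb)
  have hpos : 0 < ∫ x, (1 / (1 - b * x) - 1 / (1 - a * x)) ∂σ := by
    refine integral_pos_of_pos_on_Ioi hσ (hib.sub hia) ?_ fun x hx => ?_
    · filter_upwards [h0] with x hx
      have := one_le_one_sub_mul (le_of_lt hb) hx
      rw [Pi.zero_apply, sub_nonneg]
      exact one_div_le_one_div_of_le (by positivity) (by nlinarith)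
    · have := one_le_one_sub_mul (le_of_lt hb) hx.le
      rw [sub_pos]
      exact one_div_lt_one_div_of_lt (by positivity) (by nlinarith)
  rw [integral_sub hib hia] at hpos
  exact sub_pos.1 hpos

lemma χT_Mcs_sub_one [IsProbabilityMeasure σ] (h0 : ∀ᵐ x ∂σ, 0 ≤ x) (hσ : σ (Ioi 0) ≠ 0)
    {θ : ℝ} (hθ : θ < 0) : χT σ (Mcs σ θ - 1) = θ := by
  have hinj : InjOn (PsiT σ) (Iio 0) := by
    intro a ha b hb h
    rw [PsiT_eq_Mcs_sub_one h0 (le_of_lt ha), PsiT_eq_Mcs_sub_one h0 (le_of_lt hb)] at h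
    exact (strictMonoOn_Mcs h0 hσ).injOn ha hb (sub_left_inj.1 h)
  rw [← PsiT_eq_Mcs_sub_one h0 hθ.le]
  exact hinj.leftInvOn_invFunOn hθ

lemma div_div_one_sub_div {M : ℝ} (hM : M ≠ 0) : (M - 1) / M / (1 - (M - 1) / M) = M - 1 := by
  field_simp
  ring

lemma SigmaT_eq_inv_kcs [IsProbabilityMeasure σ] (h0 : ∀ᵐ x ∂σ, 0 ≤ x) (hσ : σ (Ioi 0) ≠ 0)
    {θ : ℝ} (hθ : θ < 0) : SigmaT σ ((Mcs σ θ - 1) / Mcs σ θ) = (kcs σ θ)⁻¹ := by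
  have hM := (Mcs_pos h0 hσ hθ).ne'
  rw [SigmaT, div_div_one_sub_div hM, Stransf, χT_Mcs_sub_one h0 hσ hθ, kcs]
  field_simp
  ring

lemma kcs_eq_exp [IsProbabilityMeasure σ] (h0 : ∀ᵐ x ∂σ, 0 ≤ x) (hσ : σ (Ioi 0) ≠ 0) {γ : ℝ}
    (hSig : ∀ z : ℝ, z / (1 - z) ∈ Ioo ((σ {0}).toReal - 1) (0:ℝ) →
      SigmaT σ z = Real.exp (-γ * z))
    {θ : ℝ} (hθ : θ < 0) : kcs σ θ = Real.exp (γ * ((Mcs σ θ - 1) / Mcs σ θ)) := by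
  have hM := Mcs_pos h0 hσ hθ
  have hmem : (Mcs σ θ - 1) / Mcs σ θ / (1 - (Mcs σ θ - 1) / Mcs σ θ) ∈
      Ioo ((σ {0}).toReal - 1) 0 := by
    rw [div_div_one_sub_div hM.ne']
    exact ⟨by linarith [measureReal_zero_lt_Mcs h0 hσ hθ], by linarith [Mcs_lt_one h0 hσ hθ]⟩
  have h := hSig _ hmem
  rw [SigmaT_eq_inv_kcs h0 hσ hθ, inv_eq_iff_eq_inv, ← Real.exp_neg] at h
  rw [h, neg_mul, neg_neg]

lemma tendsto_div_one_sub_mul_nhdsLT_zero (c x : ℝ) :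
    Tendsto (fun θ : ℝ => c / (1 - θ * x)) (𝓝[<] 0) (𝓝 c) := by
  have : ContinuousAt (fun θ : ℝ => c / (1 - θ * x)) 0 :=
    continuousAt_const.div (by fun_prop) (by simp)
  simpa using this.tendsto.mono_left nhdsWithin_le_nhds

lemma tendsto_Mcs_nhdsLT_zero [IsProbabilityMeasure σ] (h0 : ∀ᵐ x ∂σ, 0 ≤ x) :
    Tendsto (Mcs σ) (𝓝[<] 0) (𝓝 1) := by
  have h := tendsto_integral_filter_of_dominated_convergence (μ := σ) (l := 𝓝[<] (0 : ℝ))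
    (F := fun (θ : ℝ) x => 1 / (1 - θ * x)) (f := fun _ => 1) (fun _ => 1)
    (Eventually.of_forall fun θ => (by fun_prop : Measurable _).aestronglyMeasurable)
    (eventually_nhdsWithin_of_forall fun θ hθ =>
      ae_norm_one_div_one_sub_mul_le_one h0 (le_of_lt hθ))
    (integrable_const 1) (ae_of_all _ fun x => tendsto_div_one_sub_mul_nhdsLT_zero 1 x)
  rw [integral_const, probReal_univ, one_smul] at h
  exact h

lemma lintegral_ofReal_eq_of_tendsto [IsFiniteMeasure σ] (h0 : ∀ᵐ x ∂σ, 0 ≤ x) {a : ℝ}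
    (h : Tendsto (fun θ => ∫ x, x / (1 - θ * x) ∂σ) (𝓝[<] 0) (𝓝 a)) :
    ∫⁻ x, ENNReal.ofReal x ∂σ = ENNReal.ofReal a := by
  obtain ⟨u, hu_mono, hu_mem, hu_lim⟩ := exists_seq_strictMono_tendsto' (by norm_num : (-1 : ℝ) < 0)
  have hu : Tendsto u atTop (𝓝[<] 0) :=
    tendsto_nhdsWithin_iff.2 ⟨hu_lim, Eventually.of_forall fun n => (hu_mem n).2⟩
  have hmct := lintegral_tendsto_of_tendsto_of_monotone (μ := σ)
    (f := fun n x => ENNReal.ofReal (x / (1 - u n * x))) (F := fun x => ENNReal.ofReal x)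
    (fun n => (by fun_prop : Measurable _).aemeasurable)
    (by
      filter_upwards [h0] with x hx i j hij
      have := one_le_one_sub_mul (hu_mem j).2.le hx
      exact ENNReal.ofReal_le_ofReal (div_le_div_of_nonneg_left hx (by positivity)
        (by nlinarith [hu_mono.monotone hij])))
    (by
      filter_upwards [h0] with x hx
      exact (ENNReal.continuous_ofReal.tendsto x).comp
        ((tendsto_div_one_sub_mul_nhdsLT_zero x x).comp hu))
  refine tendsto_nhds_unique hmct ?_
  refine ((ENNReal.continuous_ofReal.tendsto a).comp (h.comp hu)).congr fun n => ?_
  refine ofReal_integral_eq_lintegral_ofReal (integrable_div_one_sub_mul h0 (hu_mem n).2) ?_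
  filter_upwards [h0] with x hx
  have := one_le_one_sub_mul (hu_mem n).2.le hx
  exact div_nonneg hx (by positivity)

lemma kcs_mul_Mcs {θ : ℝ} (hθ : θ ≠ 0) (hM : Mcs σ θ ≠ 0) :
    kcs σ θ * Mcs σ θ = (Mcs σ θ - 1) / θ := by
  rw [kcs]
  field_simp

lemma integrable_id_and_integral_eq_of_tendsto_kcs [IsProbabilityMeasure σ]
    (h0 : ∀ᵐ x ∂σ, 0 ≤ x) (hσ : σ (Ioi 0) ≠ 0) {a : ℝ} (h : Tendsto (kcs σ) (𝓝[<] 0) (𝓝 a)) :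
    Integrable (fun x => x) σ ∧ ∫ x, x ∂σ = a := by
  have hI : Tendsto (fun θ => ∫ x, x / (1 - θ * x) ∂σ) (𝓝[<] 0) (𝓝 a) := by
    have := h.mul (tendsto_Mcs_nhdsLT_zero h0)
    rw [mul_one] at this
    refine this.congr' (eventually_nhdsWithin_of_forall fun θ (hθ : θ < 0) => ?_)
    exact (kcs_mul_Mcs hθ.ne (Mcs_pos h0 hσ hθ).ne').trans (integral_div_one_sub_mul h0 hθ).symm
  have ha : 0 ≤ a := by
    refine ge_of_tendsto hI (eventually_nhdsWithin_of_forall fun θ (hθ : θ < 0) => ?_)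
    refine integral_nonneg_of_ae ?_
    filter_upwards [h0] with x hx
    have := one_le_one_sub_mul hθ.le hx
    exact div_nonneg hx (by positivity)
  have hlin := lintegral_ofReal_eq_of_tendsto h0 hI
  have hint : Integrable (fun x => x) σ :=
    (lintegral_ofReal_ne_top_iff_integrable aestronglyMeasurable_id h0).1 (hlin ▸ ofReal_ne_top)
  refine ⟨hint, ?_⟩
  rw [integral_eq_lintegral_of_nonneg_ae h0 aestronglyMeasurable_id, hlin, toReal_ofReal ha]

lemma integral_tilt (h0 : ∀ᵐ x ∂σ, 0 ≤ x) {θ : ℝ} (hθ : θ ≤ 0) (hM : 0 ≤ Mcs σ θ)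
    (g : ℝ → ℝ) : ∫ x, g x ∂(tilt σ θ) = ∫ x, g x / (Mcs σ θ * (1 - θ * x)) ∂σ := by
  rw [tilt, integral_withDensity_eq_integral_toReal_smul (by fun_prop)
    (ae_of_all _ fun _ => ofReal_lt_top)]
  refine integral_congr_ae ?_
  filter_upwards [h0] with x hx
  have := one_le_one_sub_mul hθ hx
  rw [toReal_ofReal (by positivity), smul_eq_mul, one_div_mul_eq_div]

lemma integral_sq_sub_kcs_tilt [IsProbabilityMeasure σ] (h0 : ∀ᵐ x ∂σ, 0 ≤ x)
    (hσ : σ (Ioi 0) ≠ 0) (hint : Integrable (fun x => x) σ) {θ : ℝ} (hθ : θ < 0) :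
    ∫ x, (x - kcs σ θ) ^ 2 ∂(tilt σ θ) = (kcs σ θ - ∫ x, x ∂σ) * (1 / θ - kcs σ θ) := by
  set M := Mcs σ θ
  set m := kcs σ θ
  have hM0 : 0 < M := Mcs_pos h0 hσ hθ
  have hM0' : M ≠ 0 := hM0.ne'
  have hθ0 : θ ≠ 0 := hθ.ne
  -- `(x - m)² = (1 - θx)(-x/θ + m² - C) + C` with `C = (1/θ - m)²`
  have hsplit : ∀ᵐ x ∂σ, (x - m) ^ 2 / (M * (1 - θ * x)) = -1 / (θ * M) * x
      + (m ^ 2 - (1 / θ - m) ^ 2) / M + (1 / θ - m) ^ 2 / M * (1 / (1 - θ * x)) := by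
    filter_upwards [h0] with x hx
    have : 1 - x * θ ≠ 0 := by nlinarith
    field_simp
    ring
  have hlin : Integrable (fun x => -1 / (θ * M) * x + (m ^ 2 - (1 / θ - m) ^ 2) / M) σ :=
    (hint.const_mul _).add (integrable_const _)
  have hinv := integrable_one_div_one_sub_mul h0 hθ.le
  rw [integral_tilt h0 hθ.le hM0.le, integral_congr_ae hsplit,
    integral_add hlin (hinv.const_mul _), integral_add (hint.const_mul _) (integrable_const _),
    integral_const_mul, integral_const_mul, integral_const, probReal_univ, one_smul]
  change -1 / (θ * M) * ∫ x, x ∂σ + (m ^ 2 - (1 / θ - m) ^ 2) / M + (1 / θ - m) ^ 2 / M * M = _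
  rw [show m = (M - 1) / (θ * M) from rfl]
  field_simp
  ring

lemma ψminus_lt_zero {m : ℝ} (hm : m ∈ meanDomMinus σ) : ψminus σ m < 0 :=
  Function.invFunOn_mem hm

lemma kcs_ψminus {m : ℝ} (hm : m ∈ meanDomMinus σ) : kcs σ (ψminus σ m) = m :=
  Function.invFunOn_eq hm

lemma tendsto_kcs_of_eq_exp [IsProbabilityMeasure σ] (h0 : ∀ᵐ x ∂σ, 0 ≤ x) {γ : ℝ}
    (hk : ∀ θ < 0, kcs σ θ = Real.exp (γ * ((Mcs σ θ - 1) / Mcs σ θ))) :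
    Tendsto (kcs σ) (𝓝[<] 0) (𝓝 1) := by
  have hM := tendsto_Mcs_nhdsLT_zero h0
  have h := (((hM.sub_const 1).div hM one_ne_zero).const_mul γ).rexp
  rw [sub_self, zero_div, mul_zero, Real.exp_zero] at h
  exact h.congr' (eventually_nhdsWithin_of_forall fun θ hθ => (hk θ hθ).symm)

lemma one_div_eq_of_kcs_eq_exp {γ θ : ℝ} (hγ : γ ≠ 0) (hθ : θ ≠ 0) (hM0 : Mcs σ θ ≠ 0)
    (hM1 : Mcs σ θ ≠ 1) (hk : kcs σ θ = Real.exp (γ * ((Mcs σ θ - 1) / Mcs σ θ))) :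
    1 / θ = γ * kcs σ θ / Real.log (kcs σ θ) := by
  have hM1' : Mcs σ θ - 1 ≠ 0 := sub_ne_zero.2 hM1
  rw [hk, Real.log_exp, ← hk, kcs]
  field_simp

lemma mem_Ioo_and_one_div_ψminus_eq [IsProbabilityMeasure σ] (h0 : ∀ᵐ x ∂σ, 0 ≤ x)
    (hσ : σ (Ioi 0) ≠ 0) {γ : ℝ} (hγ : 0 < γ)
    (hk : ∀ θ < 0, kcs σ θ = Real.exp (γ * ((Mcs σ θ - 1) / Mcs σ θ)))
    {m : ℝ} (hm : m ∈ meanDomMinus σ) :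
    m ∈ Ioo 0 1 ∧ 1 / ψminus σ m = γ * m / Real.log m := by
  have hθ := ψminus_lt_zero hm
  have hkm := kcs_ψminus hm
  generalize ψminus σ m = θ at hθ hkm ⊢
  subst hkm
  have hM0 := Mcs_pos h0 hσ hθ
  have hM1 := Mcs_lt_one h0 hσ hθ
  refine ⟨⟨?_, ?_⟩, one_div_eq_of_kcs_eq_exp hγ.ne' hθ.ne hM0.ne' hM1.ne (hk θ hθ)⟩
  · exact hk θ hθ ▸ Real.exp_pos _
  · rw [hk θ hθ, Real.exp_lt_one_iff]
    exact mul_neg_of_pos_of_neg hγ (div_neg_of_neg_of_pos (by linarith) hM0)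

lemma varFunMinus_eq [IsProbabilityMeasure σ] (h0 : ∀ᵐ x ∂σ, 0 ≤ x) (hσ : σ (Ioi 0) ≠ 0)
    (hint : Integrable (fun x => x) σ) {m : ℝ} (hm : m ∈ meanDomMinus σ) :
    varFunMinus σ m = (m - ∫ x, x ∂σ) * (1 / ψminus σ m - m) := by
  have h := integral_sq_sub_kcs_tilt h0 hσ hint (ψminus_lt_zero hm)
  rwa [kcs_ψminus hm] at h

end CauchyStieltjes

theorem sigma_gamma_varFun_general (γ : ℝ) (hγ : 0 < γ)
    (σ : Measure ℝ) [IsProbabilityMeasure σ]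
    (hpos : σ (Iio 0) = 0) (hatom : σ {0} < 1)
    (hSig : ∀ z : ℝ, z / (1 - z) ∈ Ioo ((σ {0}).toReal - 1) (0:ℝ) →
      SigmaT σ z = Real.exp (-γ * z)) :
    (∫ x, x ∂σ) = 1 ∧ meanDomMinus σ ⊆ Ioo 0 1 ∧
    ∀ m ∈ meanDomMinus σ,
      pseudoVarMinus σ m = γ * m ^ 2 / Real.log m - m ^ 2 ∧
      varFunMinus σ m = γ * m * (m - 1) / Real.log m + m * (1 - m) := by
  have h0 := ae_nonneg_of_measure_Iio_eq_zero hpos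
  have hσ := measure_Ioi_ne_zero_of_measure_Iio_eq_zero hpos hatom
  have hk : ∀ θ < 0, kcs σ θ = Real.exp (γ * ((Mcs σ θ - 1) / Mcs σ θ)) :=
    fun θ hθ => kcs_eq_exp h0 hσ hSig hθ
  obtain ⟨hint, hmean⟩ :=
    integrable_id_and_integral_eq_of_tendsto_kcs h0 hσ (tendsto_kcs_of_eq_exp h0 hk)
  have hparam := fun m (hm : m ∈ meanDomMinus σ) => mem_Ioo_and_one_div_ψminus_eq h0 hσ hγ hk hm
  refine ⟨hmean, fun m hm => (hparam m hm).1, fun m hm => ?_⟩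
  obtain ⟨⟨hm0, hm1⟩, hinv⟩ := hparam m hm
  have hlog : Real.log m ≠ 0 := (Real.log_neg hm0 hm1).ne
  constructor
  · rw [pseudoVarMinus, hinv]
    field_simp
  · rw [varFunMinus_eq h0 hσ hint hm, hmean, hinv]
    field_simp
    ring

/-- the measure `σ_γ` with `Σ_{σ_γ}(z) = exp(-γz)` has mean 1,
pseudo-variance function `γm²/ln m - m²` and variance function
`γm(m-1)/ln m + m(1-m)`, on a domain of means contained in `(0,1)`. -/
theorem sigma_gamma_varFun (γ : ℝ) (hγ : 0 < γ)
    (σ : Measure ℝ) [IsProbabilityMeasure σ]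
    (hnd : Nondeg σ) (hpos : σ (Iio 0) = 0) (hatom : σ {0} < 1)
    (hSig : ∀ z : ℝ, z / (1 - z) ∈ Ioo ((σ {0}).toReal - 1) (0:ℝ) →
      SigmaT σ z = Real.exp (-γ * z)) :
    (∫ x, x ∂σ) = 1 ∧ meanDomMinus σ ⊆ Ioo 0 1 ∧
    ∀ m ∈ meanDomMinus σ,
      pseudoVarMinus σ m = γ * m ^ 2 / Real.log m - m ^ 2 ∧
      varFunMinus σ m = γ * m * (m - 1) / Real.log m + m * (1 - m) :=
  sigma_gamma_varFun_general γ hγ σ hpos hatom hSig
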